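/- Let α be a graphic degree sequence of length n ≥ 2. If α has at least one forced edge, then the edge {1,2} between the two vertices of largest degree is forced for α. -/

import Mathlib

/-!
If `{i, j}` is forced and `α k ≥ α i`, then `{k, j}` is forced. Otherwise some realization
contains `ij` but not `kj`; comparing `N(k) \ {i}` with `N(i) \ {k}`, the degree condition gives a
neighbour `x ≠ i` of `k` outside `N(i)`, and the 2-switch replacing `ij, kx` by `jk, xi` is a
realization without `ij`. Moving the endpoints of a forced edge to the vertices `0` and `1` of
largest degree in this way gives the theorem.
-/

/-- `G` is a (labeled) realization of the degree sequence `α` if the degree of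
vertex `v` in `G` equals `α v` for every `v`. -/
def IsRealization {n : ℕ} (α : Fin n → ℕ) (G : SimpleGraph (Fin n)) : Prop :=
  ∀ v : Fin n, (G.neighborSet v).ncard = α v

/-- A sequence is graphic if it has a realization. -/
def Graphic {n : ℕ} (α : Fin n → ℕ) : Prop :=
  ∃ G : SimpleGraph (Fin n), IsRealization α G

/-- The edge `{i,j}` is forced for `α` if it lies in every realization of `α`. -/
def ForcedEdge {n : ℕ} (α : Fin n → ℕ) (i j : Fin n) : Prop :=
  ∀ G : SimpleGraph (Fin n), IsRealization α G → G.Adj i j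

/-- The edge `{i,j}` is forbidden for `α` if it lies in no realization of `α`. -/
def ForbiddenEdge {n : ℕ} (α : Fin n → ℕ) (i j : Fin n) : Prop :=
  ∀ G : SimpleGraph (Fin n), IsRealization α G → ¬ G.Adj i j

/-- `α` majorizes `β`: every partial sum of `α` is at least the corresponding
partial sum of `β`, and the total sums agree. -/
def Majorizes {n : ℕ} (α β : Fin n → ℕ) : Prop :=
  (∀ k : ℕ, k ≤ n →
    ∑ i ∈ Finset.univ.filter (fun i : Fin n => (i : ℕ) < k), β i ≤
    ∑ i ∈ Finset.univ.filter (fun i : Fin n => (i : ℕ) < k), α i) ∧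
  ∑ i, α i = ∑ i, β i

namespace SimpleGraph

variable {V : Type*} {G : SimpleGraph V} {i j k x v : V}

def twoSwitch (G : SimpleGraph V) (i j k x : V) : SimpleGraph V :=
  fromEdgeSet ((G.edgeSet \ {s(i, j), s(k, x)}) ∪ {s(j, k), s(x, i)})

lemma twoSwitch_swap (G : SimpleGraph V) (i j k x : V) :
    G.twoSwitch j i x k = G.twoSwitch i j k x := by
  rw [twoSwitch, twoSwitch, Sym2.eq_swap (a := j) (b := i), Sym2.eq_swap (a := x) (b := k),
    Sym2.eq_swap (a := i) (b := x), Sym2.eq_swap (a := k) (b := j), Set.pair_comm s(x, i)]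

lemma twoSwitch_comm (G : SimpleGraph V) (i j k x : V) :
    G.twoSwitch k x i j = G.twoSwitch i j k x := by
  rw [twoSwitch, twoSwitch, Set.pair_comm s(k, x), Set.pair_comm s(x, i)]

lemma neighborSet_twoSwitch_left (hij : G.Adj i j) (hik : i ≠ k) (hxi : x ≠ i) :
    (G.twoSwitch i j k x).neighborSet i = insert x (G.neighborSet i \ {j}) := by
  ext u
  simp only [twoSwitch, mem_neighborSet, fromEdgeSet_adj, Set.mem_union, Set.mem_sdiff,
    mem_edgeSet, Set.mem_insert_iff, Set.mem_singleton_iff, Sym2.eq_iff]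
  aesop

lemma neighborSet_twoSwitch_of_ne (hvi : v ≠ i) (hvj : v ≠ j) (hvk : v ≠ k) (hvx : v ≠ x) :
    (G.twoSwitch i j k x).neighborSet v = G.neighborSet v := by
  ext u
  simp only [twoSwitch, mem_neighborSet, fromEdgeSet_adj, Set.mem_union, Set.mem_sdiff,
    mem_edgeSet, Set.mem_insert_iff, Set.mem_singleton_iff, Sym2.eq_iff]
  aesop

lemma ncard_neighborSet_twoSwitch_left (hij : G.Adj i j) (hnix : ¬ G.Adj i x) (hik : i ≠ k)
    (hxi : x ≠ i) : ((G.twoSwitch i j k x).neighborSet i).ncard = (G.neighborSet i).ncard := by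
  rw [neighborSet_twoSwitch_left hij hik hxi]
  exact Set.ncard_exchange hnix hij

lemma ncard_neighborSet_twoSwitch (hij : G.Adj i j) (hkx : G.Adj k x)
    (hnkj : ¬ G.Adj k j) (hnix : ¬ G.Adj i x) (hik : i ≠ k) (hjx : j ≠ x) (hkj : k ≠ j)
    (hxi : x ≠ i) (v : V) :
    ((G.twoSwitch i j k x).neighborSet v).ncard = (G.neighborSet v).ncard := by
  by_cases hvi : v = i
  · subst hvi
    exact ncard_neighborSet_twoSwitch_left hij hnix hik hxi
  by_cases hvj : v = j
  · subst hvj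
    rw [← twoSwitch_swap]
    exact ncard_neighborSet_twoSwitch_left hij.symm (fun h => hnkj h.symm) hjx hkj
  by_cases hvk : v = k
  · subst hvk
    rw [← twoSwitch_comm]
    exact ncard_neighborSet_twoSwitch_left hkx hnkj hik.symm hkj.symm
  by_cases hvx : v = x
  · subst hvx
    rw [← twoSwitch_comm, ← twoSwitch_swap]
    exact ncard_neighborSet_twoSwitch_left hkx.symm (fun h => hnix h.symm) hjx.symm hxi.symm
  rw [neighborSet_twoSwitch_of_ne hvi hvj hvk hvx]

lemma not_adj_twoSwitch (hik : i ≠ k) (hjx : j ≠ x) : ¬ (G.twoSwitch i j k x).Adj i j := by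
  simp only [twoSwitch, fromEdgeSet_adj, Set.mem_union, Set.mem_sdiff, mem_edgeSet,
    Set.mem_insert_iff, Set.mem_singleton_iff, Sym2.eq_iff]
  tauto

lemma ncard_neighborSet_sdiff_le (h : (G.neighborSet i).ncard ≤ (G.neighborSet k).ncard) :
    (G.neighborSet i \ {k}).ncard ≤ (G.neighborSet k \ {i}).ncard := by
  by_cases hik : k ∈ G.neighborSet i
  · have hki : i ∈ G.neighborSet k := G.adj_symm hik
    rw [Set.ncard_sdiff_singleton_of_mem hik, Set.ncard_sdiff_singleton_of_mem hki]
    omega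
  · have hki : i ∉ G.neighborSet k := mt G.adj_symm hik
    rw [Set.sdiff_singleton_eq_self hik, Set.sdiff_singleton_eq_self hki]
    exact h

lemma exists_adj_not_adj_of_ncard_le [Finite V]
    (h : (G.neighborSet i).ncard ≤ (G.neighborSet k).ncard) (hij : G.Adj i j)
    (hnkj : ¬ G.Adj k j) (hjk : j ≠ k) :
    ∃ x, G.Adj k x ∧ ¬ G.Adj i x ∧ x ≠ i := by
  have hnsub : ¬ G.neighborSet k \ {i} ⊆ G.neighborSet i \ {k} := fun hsub =>
    (Set.ncard_lt_ncard ((Set.ssubset_iff_of_subset hsub).2 ⟨j, ⟨hij, hjk⟩, fun hj => hnkj hj.1⟩)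
      ).not_ge (ncard_neighborSet_sdiff_le h)
  obtain ⟨x, ⟨hkx, hxi⟩, hx⟩ := Set.not_subset.1 hnsub
  refine ⟨x, hkx, fun hix => hx ⟨hix, ?_⟩, hxi⟩
  rintro rfl
  exact G.irrefl hkx

end SimpleGraph

open SimpleGraph

namespace ForcedEdge

variable {n : ℕ} {α : Fin n → ℕ} {i j k : Fin n}

lemma symm (h : ForcedEdge α i j) : ForcedEdge α j i :=
  fun G hG => (h G hG).symm

lemma of_le (h : ForcedEdge α i j) (hle : α i ≤ α k) (hkj : k ≠ j) :
    ForcedEdge α k j := by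
  intro G hG
  by_cases hik : i = k
  · exact hik ▸ h G hG
  by_contra hnkj
  have hij := h G hG
  obtain ⟨x, hkx, hnix, hxi⟩ :=
    exists_adj_not_adj_of_ncard_le (by rwa [hG, hG]) hij hnkj hkj.symm
  have hjx : j ≠ x := by rintro rfl; exact hnkj hkx
  have hG' : IsRealization α (G.twoSwitch i j k x) := fun v => by
    rw [ncard_neighborSet_twoSwitch hij hkx hnkj hnix hik hjx hkj hxi, hG]
  exact not_adj_twoSwitch hik hjx (h _ hG')

end ForcedEdge

/-- if a graphic nonincreasing degree sequence `α` of length `n ≥ 2`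
has at least one forced edge, then the edge `{1,2}` between the two vertices of
largest degree is forced for `α`. -/
theorem first_edge_forced {n : ℕ} (hn : 2 ≤ n) (α : Fin n → ℕ)
    (hα : Antitone α)
    (h : ∃ i j : Fin n, i ≠ j ∧ ForcedEdge α i j) :
    ForcedEdge α ⟨0, by omega⟩ ⟨1, by omega⟩ := by
  obtain ⟨i, j, hij, hf⟩ := h
  have hα0 (v : Fin n) : α v ≤ α ⟨0, by omega⟩ := hα (Nat.zero_le _)
  obtain ⟨m, hm0, hfm⟩ : ∃ m : Fin n, (m : ℕ) ≠ 0 ∧ ForcedEdge α ⟨0, by omega⟩ m := by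
    by_cases hj0 : (j : ℕ) = 0
    · have hi0 : (i : ℕ) ≠ 0 := fun hi0 => hij (Fin.ext (hi0.trans hj0.symm))
      exact ⟨i, hi0, hf.symm.of_le (hα0 j) (Fin.ne_of_val_ne (Ne.symm hi0))⟩
    · exact ⟨j, hj0, hf.of_le (hα0 i) (Fin.ne_of_val_ne (Ne.symm hj0))⟩
  have hα1 : α m ≤ α ⟨1, by omega⟩ := hα (Nat.one_le_iff_ne_zero.2 hm0)
  exact (hfm.symm.of_le hα1 (Fin.ne_of_val_ne one_ne_zero)).symm
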